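/- Let A, B, U_1, U_2 be as follows: U = [U_1, U_2] ∈ R^{d×k} with orthonormal columns, U_1 ∈ R^{d×k1}, U_2 ∈ R^{d×k2}, and V̄ = [V̄_1, V̄_2] ∈ R^{d×k} with orthonormal-column blocks V̄_1, V̄_2. Then ‖(I − UU^⊤)V̄‖ ≤ 2(‖(I − U_1U_1^⊤)V̄_1‖ + ‖(I − U_2U_2^⊤)V̄_2‖), using that ‖U_2U_2^⊤V̄_1‖ ≤ ‖(I − U_1U_1^⊤)V̄_1‖ and ‖U_1U_1^⊤V̄_2‖ ≤ ‖(I − U_2U_2^⊤)V̄_2‖. -/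

import Mathlib

open MeasureTheory ProbabilityTheory Real Matrix

noncomputable def euclNorm {ι : Type*} [Fintype ι] (v : ι → ℝ) : ℝ :=
  Real.sqrt (∑ i, (v i)^2)

noncomputable def specNorm {ι κ : Type*} [Fintype ι] [Fintype κ] (A : Matrix ι κ ℝ) : ℝ :=
  sSup {r : ℝ | ∃ x : κ → ℝ, euclNorm x = 1 ∧ r = euclNorm (A.mulVec x)}

noncomputable def sigmaMin {ι κ : Type*} [Fintype ι] [Fintype κ] (A : Matrix ι κ ℝ) : ℝ :=
  sInf {r : ℝ | ∃ x : κ → ℝ, euclNorm x = 1 ∧ r = euclNorm (A.mulVec x)}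

noncomputable def frobNorm {ι κ : Type*} [Fintype ι] [Fintype κ] (A : Matrix ι κ ℝ) : ℝ :=
  Real.sqrt (∑ i, ∑ j, (A i j)^2)

noncomputable def stdGaussian (d : ℕ) : Measure (Fin d → ℝ) :=
  Measure.pi fun _ => gaussianReal 0 1

/-!
Write `Pᵢ = UᵢUᵢᵀ`. Both are orthogonal projections and `P₂P₁ = 0`, so
`I − (P₁ + P₂) = (I − P₂)(I − P₁)`; as `I − P₂` is again an orthogonal projection it is a
contraction, whence `‖(I − UUᵀ)V̄₁a‖ ≤ ‖(I − P₁)V̄₁a‖`, and symmetrically for `V̄₂`.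
A unit vector `x = (a, b)` has `‖a‖, ‖b‖ ≤ 1`, so the triangle inequality bounds
`‖(I − UUᵀ)V̄x‖` by `‖(I − P₁)V̄₁‖ + ‖(I − P₂)V̄₂‖`.
-/

section euclNorm

variable {ι : Type*} [Fintype ι]

lemma euclNorm_eq_norm_toLp (v : ι → ℝ) : euclNorm v = ‖WithLp.toLp 2 v‖ := by
  simp [euclNorm, EuclideanSpace.norm_eq]

lemma euclNorm_nonneg (v : ι → ℝ) : 0 ≤ euclNorm v :=
  Real.sqrt_nonneg _

lemma euclNorm_pos {v : ι → ℝ} (hv : v ≠ 0) : 0 < euclNorm v := by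
  rw [euclNorm_eq_norm_toLp]
  exact norm_pos_iff.2 (by simpa using hv)

lemma euclNorm_add_le (u v : ι → ℝ) : euclNorm (u + v) ≤ euclNorm u + euclNorm v := by
  simpa only [euclNorm_eq_norm_toLp, WithLp.toLp_add] using norm_add_le _ _

lemma euclNorm_smul (c : ℝ) (v : ι → ℝ) : euclNorm (c • v) = |c| * euclNorm v := by
  rw [euclNorm_eq_norm_toLp, euclNorm_eq_norm_toLp, WithLp.toLp_smul, norm_smul,
    Real.norm_eq_abs]

lemma euclNorm_sq (v : ι → ℝ) : euclNorm v ^ 2 = v ⬝ᵥ v := by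
  rw [euclNorm, Real.sq_sqrt (by positivity)]
  simp only [dotProduct, sq]

lemma dotProduct_le_euclNorm_mul_euclNorm (v w : ι → ℝ) : v ⬝ᵥ w ≤ euclNorm v * euclNorm w :=
  Real.sum_mul_le_sqrt_mul_sqrt _ v w

lemma euclNorm_sumElim_sq {κ : Type*} [Fintype κ] (a : ι → ℝ) (b : κ → ℝ) :
    euclNorm (Sum.elim a b) ^ 2 = euclNorm a ^ 2 + euclNorm b ^ 2 := by
  simp only [euclNorm_sq, sumElim_dotProduct_sumElim]

end euclNorm

section specNorm

variable {ι κ : Type*} [Fintype ι] [Fintype κ]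

lemma euclNorm_mulVec_le_frobNorm_mul (A : Matrix ι κ ℝ) (x : κ → ℝ) :
    euclNorm (A *ᵥ x) ≤ frobNorm A * euclNorm x := by
  have hrows : ∑ i, (A *ᵥ x) i ^ 2 ≤ ∑ i, (∑ j, A i j ^ 2) * ∑ j, x j ^ 2 :=
    Finset.sum_le_sum fun i _ => Finset.sum_mul_sq_le_sq_mul_sq _ (A i) x
  calc euclNorm (A *ᵥ x) ≤ Real.sqrt ((∑ i, ∑ j, A i j ^ 2) * ∑ j, x j ^ 2) := by
        rw [Finset.sum_mul]
        exact Real.sqrt_le_sqrt hrows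
    _ = frobNorm A * euclNorm x := Real.sqrt_mul (by positivity) _

lemma specNorm_bddAbove (A : Matrix ι κ ℝ) :
    BddAbove {r : ℝ | ∃ x : κ → ℝ, euclNorm x = 1 ∧ r = euclNorm (A *ᵥ x)} := by
  refine ⟨frobNorm A, ?_⟩
  rintro _ ⟨x, hx, rfl⟩
  simpa [hx] using euclNorm_mulVec_le_frobNorm_mul A x

lemma specNorm_nonneg (A : Matrix ι κ ℝ) : 0 ≤ specNorm A :=
  Real.sSup_nonneg fun _ ⟨_, _, hr⟩ => hr ▸ euclNorm_nonneg _

lemma euclNorm_mulVec_le_specNorm_mul (A : Matrix ι κ ℝ) (x : κ → ℝ) :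
    euclNorm (A *ᵥ x) ≤ specNorm A * euclNorm x := by
  obtain rfl | hx := eq_or_ne x 0
  · simp [euclNorm]
  have hpos := euclNorm_pos hx
  set y := (euclNorm x)⁻¹ • x
  have hy : euclNorm y = 1 := by
    rw [euclNorm_smul, abs_inv, abs_of_pos hpos, inv_mul_cancel₀ hpos.ne']
  have hAy : euclNorm (A *ᵥ y) ≤ specNorm A := le_csSup (specNorm_bddAbove A) ⟨y, hy, rfl⟩
  have hAx : A *ᵥ x = euclNorm x • A *ᵥ y := by
    rw [mulVec_smul, smul_smul, mul_inv_cancel₀ hpos.ne', one_smul]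
  rw [hAx, euclNorm_smul, abs_of_pos hpos, mul_comm]
  exact mul_le_mul_of_nonneg_right hAy hpos.le

lemma euclNorm_mulVec_le_specNorm (A : Matrix ι κ ℝ) {x : κ → ℝ} (hx : euclNorm x ≤ 1) :
    euclNorm (A *ᵥ x) ≤ specNorm A :=
  (euclNorm_mulVec_le_specNorm_mul A x).trans (mul_le_of_le_one_right (specNorm_nonneg A) hx)

lemma specNorm_le {A : Matrix ι κ ℝ} {c : ℝ} (hc : 0 ≤ c)
    (h : ∀ x, euclNorm x = 1 → euclNorm (A *ᵥ x) ≤ c) : specNorm A ≤ c :=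
  Real.sSup_le (by rintro _ ⟨x, hx, rfl⟩; exact h x hx) hc

end specNorm

section projection

variable {m n : Type*} [Fintype m] [Fintype n]

lemma isStarProjection_mul_transpose [DecidableEq n] {U : Matrix m n ℝ} (hU : Uᵀ * U = 1) :
    IsStarProjection (U * Uᵀ) where
  isIdempotentElem := by
    rw [IsIdempotentElem, Matrix.mul_assoc, ← Matrix.mul_assoc Uᵀ, hU, Matrix.one_mul]
  isSelfAdjoint := by
    rw [IsSelfAdjoint, star_eq_conjTranspose, conjTranspose_eq_transpose_of_trivial,
      transpose_mul, transpose_transpose]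

lemma euclNorm_mulVec_le_of_isStarProjection {P : Matrix m m ℝ} (hP : IsStarProjection P)
    (v : m → ℝ) : euclNorm (P *ᵥ v) ≤ euclNorm v := by
  have hPt : Pᵀ = P := by
    simpa [IsSelfAdjoint, star_eq_conjTranspose] using hP.isSelfAdjoint.star_eq
  have hsq : euclNorm (P *ᵥ v) ^ 2 = v ⬝ᵥ P *ᵥ v := by
    rw [euclNorm_sq, dotProduct_mulVec, vecMul_mulVec, ← mulVec_transpose, hPt,
      hP.isIdempotentElem.eq, hPt, dotProduct_comm]
  have hcs := dotProduct_le_euclNorm_mul_euclNorm v (P *ᵥ v)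
  nlinarith [euclNorm_nonneg v, euclNorm_nonneg (P *ᵥ v)]

lemma euclNorm_one_sub_add_mulVec_le [DecidableEq m] {P Q : Matrix m m ℝ}
    (hQ : IsStarProjection Q) (hQP : Q * P = 0) (w : m → ℝ) :
    euclNorm ((1 - (P + Q)) *ᵥ w) ≤ euclNorm ((1 - P) *ᵥ w) := by
  have hfactor : 1 - (P + Q) = (1 - Q) * (1 - P) := by
    rw [sub_mul, one_mul, mul_sub, mul_one, hQP, sub_zero]
    abel
  rw [hfactor, ← mulVec_mulVec]
  exact euclNorm_mulVec_le_of_isStarProjection hQ.one_sub _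

end projection

lemma specNorm_one_sub_mul_fromCols_le {m n₁ n₂ l₁ l₂ : Type*} [Fintype m] [DecidableEq m]
    [Fintype n₁] [DecidableEq n₁] [Fintype n₂] [DecidableEq n₂] [Fintype l₁] [Fintype l₂]
    {U₁ : Matrix m n₁ ℝ} {U₂ : Matrix m n₂ ℝ} (V₁ : Matrix m l₁ ℝ) (V₂ : Matrix m l₂ ℝ)
    (hU₁ : U₁ᵀ * U₁ = 1) (hU₂ : U₂ᵀ * U₂ = 1) (hU₁₂ : U₁ᵀ * U₂ = 0) :
    specNorm ((1 - (U₁ * U₁ᵀ + U₂ * U₂ᵀ)) * fromCols V₁ V₂)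
      ≤ specNorm ((1 - U₁ * U₁ᵀ) * V₁) + specNorm ((1 - U₂ * U₂ᵀ) * V₂) := by
  have hP₁₂ : U₁ * U₁ᵀ * (U₂ * U₂ᵀ) = 0 := by
    rw [Matrix.mul_assoc, ← Matrix.mul_assoc U₁ᵀ, hU₁₂, Matrix.zero_mul, Matrix.mul_zero]
  have hP₂₁ : U₂ * U₂ᵀ * (U₁ * U₁ᵀ) = 0 := by
    simpa [transpose_mul, Matrix.mul_assoc] using congrArg transpose hP₁₂
  refine specNorm_le (add_nonneg (specNorm_nonneg _) (specNorm_nonneg _)) fun x hx => ?_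
  obtain ⟨a, b, rfl⟩ : ∃ a b, x = Sum.elim a b := ⟨_, _, (Sum.elim_comp_inl_inr x).symm⟩
  have hab := euclNorm_sumElim_sq a b
  rw [hx] at hab
  have ha : euclNorm a ≤ 1 :=
    (pow_le_one_iff_of_nonneg (euclNorm_nonneg a) two_ne_zero).1
      (by linarith [sq_nonneg (euclNorm b)])
  have hb : euclNorm b ≤ 1 :=
    (pow_le_one_iff_of_nonneg (euclNorm_nonneg b) two_ne_zero).1
      (by linarith [sq_nonneg (euclNorm a)])
  rw [← mulVec_mulVec, fromCols_mulVec_sumElim, mulVec_add]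
  calc _ ≤ _ := euclNorm_add_le _ _
    _ ≤ euclNorm ((1 - U₁ * U₁ᵀ) *ᵥ V₁ *ᵥ a) + euclNorm ((1 - U₂ * U₂ᵀ) *ᵥ V₂ *ᵥ b) := by
        gcongr
        · exact euclNorm_one_sub_add_mulVec_le (isStarProjection_mul_transpose hU₂) hP₂₁ _
        · rw [add_comm]
          exact euclNorm_one_sub_add_mulVec_le (isStarProjection_mul_transpose hU₁) hP₁₂ _
    _ ≤ _ := by
        simp only [mulVec_mulVec]
        exact add_le_add (euclNorm_mulVec_le_specNorm _ ha) (euclNorm_mulVec_le_specNorm _ hb)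

theorem stmt19_general (d k1 k2 : ℕ)
    (U1 : Matrix (Fin d) (Fin k1) ℝ) (U2 : Matrix (Fin d) (Fin k2) ℝ)
    (Vb1 : Matrix (Fin d) (Fin k1) ℝ) (Vb2 : Matrix (Fin d) (Fin k2) ℝ)
    (hU1 : U1ᵀ * U1 = 1) (hU2 : U2ᵀ * U2 = 1) (hU12 : U1ᵀ * U2 = 0) :
    specNorm ((1 - (U1 * U1ᵀ + U2 * U2ᵀ)) * Matrix.fromCols Vb1 Vb2)
      ≤ 2 * (specNorm ((1 - U1 * U1ᵀ) * Vb1) + specNorm ((1 - U2 * U2ᵀ) * Vb2)) := by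
  have hs₁ := specNorm_nonneg ((1 - U1 * U1ᵀ) * Vb1)
  have hs₂ := specNorm_nonneg ((1 - U2 * U2ᵀ) * Vb2)
  linarith [specNorm_one_sub_mul_fromCols_le Vb1 Vb2 hU1 hU2 hU12]

/-- Block bound: for `U = [U₁, U₂]` with orthonormal columns (`U₁ᵀU₂ = 0`) and
`V̄ = [V̄₁, V̄₂]` with orthonormal-column blocks,
`‖(I − UUᵀ)V̄‖ ≤ 2(‖(I − U₁U₁ᵀ)V̄₁‖ + ‖(I − U₂U₂ᵀ)V̄₂‖)`. -/
theorem stmt19 (d k1 k2 : ℕ)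
    (U1 : Matrix (Fin d) (Fin k1) ℝ) (U2 : Matrix (Fin d) (Fin k2) ℝ)
    (Vb1 : Matrix (Fin d) (Fin k1) ℝ) (Vb2 : Matrix (Fin d) (Fin k2) ℝ)
    (hU1 : U1ᵀ * U1 = 1) (hU2 : U2ᵀ * U2 = 1) (hU12 : U1ᵀ * U2 = 0)
    (hVb1 : Vb1ᵀ * Vb1 = 1) (hVb2 : Vb2ᵀ * Vb2 = 1) :
    specNorm ((1 - (U1 * U1ᵀ + U2 * U2ᵀ)) * Matrix.fromCols Vb1 Vb2)
      ≤ 2 * (specNorm ((1 - U1 * U1ᵀ) * Vb1) + specNorm ((1 - U2 * U2ᵀ) * Vb2)) :=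
  stmt19_general d k1 k2 U1 U2 Vb1 Vb2 hU1 hU2 hU12
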